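/- arXiv:cs/0109018 — 2 statements merged into one kernel-verified Lean document; each statement's English description precedes it below -/
import Mathlib

section
/- Let k ≥ 1 and let c₁, …, c₂ₖ be natural numbers such that for each i with 1 ≤ i ≤ k, c_{2i-1} ∈ {3, 5} and c_{2i} ∈ {3, 4}, and additionally the sequence is 'monotone' in the sense that if c_j = 3 fails then c_{j'} = 3 fails for all j' > j (i.e., once a value exceeds 3, all later odd-indexed values are 5 and later even-indexed values are 4). Define S = Σ_{i=1}^{k} max(c_{2i-1}, c_{2i}). Then S ∈ {3k+1, 3k+3, …, 5k−1} if and only if there exists i with 1 ≤ i ≤ k such that c₁ = ⋯ = c_{2i-1} = 3, c_{2i} = 4, and c_j > 3 for all j > 2i. -/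
/-- Wagner's counting argument on the level of chromatic-number values:
for a sequence c₁, …, c_{2k} with odd-indexed values in {3,5}, even-indexed
values in {3,4}, and monotone in the sense that once a value differs from 3
all later values differ from 3, the sum S = Σᵢ max(c_{2i-1}, c_{2i}) lies in
{3k+1, 3k+3, …, 5k−1} = {5k − 2i + 1 : 1 ≤ i ≤ k} iff there is an i with
c₁ = ⋯ = c_{2i-1} = 3, c_{2i} = 4, and all later values exceeding 3. -/
theorem sum_max_mem_iff (k : ℕ) (hk : 1 ≤ k) (c : ℕ → ℕ)
    (hodd : ∀ i, 1 ≤ i → i ≤ k → c (2 * i - 1) = 3 ∨ c (2 * i - 1) = 5)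
    (heven : ∀ i, 1 ≤ i → i ≤ k → c (2 * i) = 3 ∨ c (2 * i) = 4)
    (hmono : ∀ j j', 1 ≤ j → j ≤ j' → j' ≤ 2 * k → c j ≠ 3 → c j' ≠ 3) :
    (∃ i, 1 ≤ i ∧ i ≤ k ∧
        (∑ i ∈ Finset.Icc 1 k, max (c (2 * i - 1)) (c (2 * i))) = 5 * k - 2 * i + 1)
      ↔
    (∃ i, 1 ≤ i ∧ i ≤ k ∧
        (∀ j, 1 ≤ j → j ≤ 2 * i - 1 → c j = 3) ∧ c (2 * i) = 4 ∧
        (∀ j, 2 * i < j → j ≤ 2 * k → c j > 3)) := by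
  have key : ∀ i, 1 ≤ i → i ≤ k → c (2 * i - 1) = 3 → c (2 * i) = 4 →
      (∀ j, 1 ≤ j → j ≤ 2 * i - 1 → c j = 3) ∧
      (∀ j, 2 * i < j → j ≤ 2 * k → c j > 3) := by
    intro i hi1 hik h1 h2
    constructor
    · intro j hj1 hj2
      by_contra hj
      exact hmono j (2 * i - 1) hj1 hj2 (by omega) hj h1
    · intro j hj1 hj2
      have hne : c j ≠ 3 := hmono (2 * i) j (by omega) (by omega) hj2 (by omega)
      rcases Nat.even_or_odd j with he | ho
      · obtain ⟨m, hm⟩ := he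
        have h := heven m (by omega) (by omega)
        have hjm : 2 * m = j := by omega
        rw [hjm] at h
        omega
      · obtain ⟨m, hm⟩ := ho
        have h := hodd (m + 1) (by omega) (by omega)
        have hjm : 2 * (m + 1) - 1 = j := by omega
        rw [hjm] at h
        omega
  constructor
  · rintro ⟨i, hi1, hik, hsum⟩
    by_contra hR
    have hB : ∀ m, 1 ≤ m → m ≤ k → c (2 * m - 1) = 3 → c (2 * m) ≠ 4 := by
      intro m h1 h2 h3 h4
      exact hR ⟨m, h1, h2, (key m h1 h2 h3 h4).1, h4, (key m h1 h2 h3 h4).2⟩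
    have hterm : ∀ j ∈ Finset.Icc 1 k, max (c (2 * j - 1)) (c (2 * j)) % 2 = 1 := by
      intro j hj
      rw [Finset.mem_Icc] at hj
      have h1 := hodd j hj.1 hj.2
      have h2 := heven j hj.1 hj.2
      have h3 := hB j hj.1 hj.2
      rcases h1 with h | h <;> rcases h2 with h' | h'
      · rw [h, h']; decide
      · exact absurd h' (h3 h)
      · rw [h, h']; decide
      · rw [h, h']; decide
    have hpar : (∑ j ∈ Finset.Icc 1 k, max (c (2 * j - 1)) (c (2 * j))) % 2 = k % 2 := by
      rw [Finset.sum_nat_mod, Finset.sum_congr rfl hterm, Finset.sum_const, Nat.card_Icc]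
      simp
    omega
  · rintro ⟨i, hi1, hik, hall3, h4, hgt⟩
    refine ⟨i, hi1, hik, ?_⟩
    have hdisj : Disjoint (Finset.Icc 1 i) (Finset.Ioc i k) := by
      rw [Finset.disjoint_left]
      intro a ha hb
      rw [Finset.mem_Icc] at ha
      rw [Finset.mem_Ioc] at hb
      omega
    have hsplit : Finset.Icc 1 k = Finset.Icc 1 i ∪ Finset.Ioc i k := by
      ext a
      simp only [Finset.mem_Icc, Finset.mem_Ioc, Finset.mem_union]
      omega
    have hA : ∀ j ∈ Finset.Icc 1 i,
        max (c (2 * j - 1)) (c (2 * j)) = 3 + (if j = i then 1 else 0) := by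
      intro j hj
      rw [Finset.mem_Icc] at hj
      have h1 : c (2 * j - 1) = 3 := hall3 _ (by omega) (by omega)
      by_cases hji : j = i
      · subst hji; rw [h1, h4]; simp
      · have h2 : c (2 * j) = 3 := hall3 (2 * j) (by omega) (by omega)
        rw [h1, h2]; simp [hji]
    have hC : ∀ j ∈ Finset.Ioc i k, max (c (2 * j - 1)) (c (2 * j)) = 5 := by
      intro j hj
      rw [Finset.mem_Ioc] at hj
      have h1 := hodd j (by omega) hj.2
      have h2 := heven j (by omega) hj.2
      have g1 := hgt (2 * j - 1) (by omega) (by omega)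
      have g2 := hgt (2 * j) (by omega) (by omega)
      have e1 : c (2 * j - 1) = 5 := by omega
      have e2 : c (2 * j) = 4 := by omega
      rw [e1, e2]; decide
    rw [hsplit, Finset.sum_union hdisj, Finset.sum_congr rfl hA, Finset.sum_congr rfl hC,
      Finset.sum_add_distrib, Finset.sum_const, Finset.sum_const, Finset.sum_ite_eq',
      Nat.card_Icc, Nat.card_Ioc]
    simp [Finset.mem_Icc, hi1]
    omega
end

section
/- Suppose for graphs H₁, …, H_{2k} (k ≥ 1) we have: χ(H_j) = 3 whenever a predicate P(j) holds; χ(H_{2i}) = 4 and χ(H_{2i−1}) = 5 whenever P fails at the respective index; and P(j+1) → P(j) for all j. Let G be the join of the k graphs G_i, where G_i is the disjoint union of H_{2i−1} and H_{2i}. Then χ(G) = Σ_{i=1}^k max(χ(H_{2i−1}), χ(H_{2i})), and the number of indices j with P(j) is odd if and only if χ(G) ∈ {3k+1, 3k+3, …, 5k−1}. -/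
/-- The disjoint union of two graphs. -/
def SimpleGraph.disjUnion {α β : Type*} (A : SimpleGraph α) (B : SimpleGraph β) :
    SimpleGraph (α ⊕ β) where
  Adj x y :=
    match x, y with
    | .inl a, .inl a' => A.Adj a a'
    | .inr b, .inr b' => B.Adj b b'
    | _, _ => False
  symm := by constructor; rintro (a | b) (a' | b') h <;> simp_all <;> exact h.symm
  loopless := by constructor; rintro (a | b) h <;> simp_all

/-- The join of a family of graphs on pairwise disjoint vertex sets. -/
def SimpleGraph.joinFamily {ι : Type*} {V : ι → Type*}
    (G : ∀ i, SimpleGraph (V i)) : SimpleGraph (Σ i, V i) where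
  Adj x y := x.1 ≠ y.1 ∨
    ∃ (i : ι) (a b : V i), x = ⟨i, a⟩ ∧ y = ⟨i, b⟩ ∧ (G i).Adj a b
  symm := by
    constructor
    rintro x y (h | ⟨i, a, b, rfl, rfl, h3⟩)
    · exact Or.inl h.symm
    · exact Or.inr ⟨i, b, a, rfl, rfl, h3.symm⟩
  loopless := by
    constructor
    rintro x (h | ⟨i, a, b, rfl, h2, h3⟩)
    · exact h rfl
    · rw [Sigma.mk.inj_iff] at h2
      obtain ⟨-, h2⟩ := h2
      cases eq_of_heq h2
      exact (G i).loopless.irrefl a h3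

lemma wag_disjUnion_colorable_iff {α β : Type*} {A : SimpleGraph α} {B : SimpleGraph β} {n : ℕ} :
    (A.disjUnion B).Colorable n ↔ A.Colorable n ∧ B.Colorable n := by
  constructor
  · rintro ⟨C⟩
    exact ⟨⟨SimpleGraph.Coloring.mk (fun a => C (.inl a)) fun {a a'} h => C.valid h⟩,
      ⟨SimpleGraph.Coloring.mk (fun b => C (.inr b)) fun {b b'} h => C.valid h⟩⟩
  · rintro ⟨⟨CA⟩, ⟨CB⟩⟩
    refine ⟨SimpleGraph.Coloring.mk (Sum.elim CA CB) ?_⟩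
    rintro (a | b) (a' | b') h
    · exact fun hc => CA.valid h (by simpa using hc)
    · exact h.elim
    · exact h.elim
    · exact fun hc => CB.valid h (by simpa using hc)

lemma wag_chromaticNumber_le_disjUnion_left {α β : Type*} (A : SimpleGraph α) (B : SimpleGraph β) :
    A.chromaticNumber ≤ (A.disjUnion B).chromaticNumber :=
  SimpleGraph.chromaticNumber_le_of_forall_imp fun _ hc => (wag_disjUnion_colorable_iff.mp hc).1

lemma wag_chromaticNumber_le_disjUnion_right {α β : Type*} (A : SimpleGraph α) (B : SimpleGraph β) :
    B.chromaticNumber ≤ (A.disjUnion B).chromaticNumber :=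
  SimpleGraph.chromaticNumber_le_of_forall_imp fun _ hc => (wag_disjUnion_colorable_iff.mp hc).2

lemma wag_chromaticNumber_disjUnion {α β : Type*}
    (A : SimpleGraph α) (B : SimpleGraph β) {a b : ℕ}
    (ha : A.chromaticNumber = (a : ℕ∞)) (hb : B.chromaticNumber = (b : ℕ∞)) :
    (A.disjUnion B).chromaticNumber = ((max a b : ℕ) : ℕ∞) := by
  have cA : A.Colorable a := SimpleGraph.chromaticNumber_le_iff_colorable.mp ha.le
  have cB : B.Colorable b := SimpleGraph.chromaticNumber_le_iff_colorable.mp hb.le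
  apply le_antisymm
  · rw [SimpleGraph.chromaticNumber_le_iff_colorable, wag_disjUnion_colorable_iff]
    exact ⟨cA.mono (le_max_left a b), cB.mono (le_max_right a b)⟩
  · rcases max_cases a b with ⟨hm, -⟩ | ⟨hm, -⟩ <;> rw [hm]
    · exact ha ▸ wag_chromaticNumber_le_disjUnion_left A B
    · exact hb ▸ wag_chromaticNumber_le_disjUnion_right A B

lemma wag_joinFamily_colorable_sum {ι : Type*} [Fintype ι] {V : ι → Type*}
    (G : ∀ i, SimpleGraph (V i)) (m : ι → ℕ) (h : ∀ i, (G i).Colorable (m i)) :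
    (SimpleGraph.joinFamily G).Colorable (∑ i, m i) := by
  classical
  have C : ∀ i, (G i).Coloring (Fin (m i)) := fun i => (h i).some
  have col : (SimpleGraph.joinFamily G).Coloring (Σ i, Fin (m i)) := by
    refine SimpleGraph.Coloring.mk (fun x => ⟨x.1, C x.1 x.2⟩) ?_
    rintro x y (hne | ⟨i, a, b, rfl, rfl, hadj⟩)
    · intro hc
      apply hne
      have := congrArg Sigma.fst hc
      simpa using this
    · intro hc
      rw [Sigma.mk.inj_iff] at hc
      exact (C i).valid hadj (eq_of_heq hc.2)
  have := col.colorable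
  simpa using this

lemma wag_sum_le_of_joinFamily_colorable {ι : Type*} [Fintype ι] {V : ι → Type*}
    [∀ i, Fintype (V i)] (G : ∀ i, SimpleGraph (V i)) {n : ℕ}
    (h : (SimpleGraph.joinFamily G).Colorable n) :
    ∑ i, (G i).chromaticNumber ≤ (n : ℕ∞) := by
  classical
  obtain ⟨C⟩ := h
  set S : ι → Finset (Fin n) := fun i => Finset.image (fun v => C ⟨i, v⟩) Finset.univ with hS
  have hcol : ∀ i, (G i).Colorable (S i).card := by
    intro i
    have col : (G i).Coloring ↥(S i) :=
      SimpleGraph.Coloring.mk (fun v => ⟨C ⟨i, v⟩, by simp [hS]⟩)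
        (fun {a b} hadj hc =>
          C.valid (Or.inr ⟨i, a, b, rfl, rfl, hadj⟩) (by simpa using congrArg Subtype.val hc))
    simpa using col.colorable
  have hdisj : ∀ i ∈ Finset.univ, ∀ j ∈ Finset.univ, i ≠ j → Disjoint (S i) (S j) := by
    intro i _ j _ hij
    rw [Finset.disjoint_left]
    rintro c hci hcj
    simp only [hS, Finset.mem_image, Finset.mem_univ, true_and] at hci hcj
    obtain ⟨a, ha⟩ := hci; obtain ⟨b, hb⟩ := hcj
    exact C.valid (Or.inl hij) (ha.trans hb.symm)
  have hsum : ∑ i, (S i).card ≤ n := by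
    rw [← Finset.card_biUnion hdisj]
    calc (Finset.univ.biUnion S).card ≤ (Finset.univ : Finset (Fin n)).card :=
          Finset.card_le_card (Finset.subset_univ _)
      _ = n := Finset.card_fin n
  calc ∑ i, (G i).chromaticNumber ≤ ∑ i, ((S i).card : ℕ∞) :=
        Finset.sum_le_sum fun i _ => (hcol i).chromaticNumber_le
    _ = ((∑ i, (S i).card : ℕ) : ℕ∞) := by rw [Nat.cast_sum]
    _ ≤ (n : ℕ∞) := Nat.cast_le.mpr hsum

lemma wag_chromaticNumber_joinFamily {ι : Type*} [Fintype ι] {V : ι → Type*}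
    [∀ i, Fintype (V i)] (G : ∀ i, SimpleGraph (V i)) (m : ι → ℕ)
    (hm : ∀ i, (G i).chromaticNumber = (m i : ℕ∞)) :
    (SimpleGraph.joinFamily G).chromaticNumber = ((∑ i, m i : ℕ) : ℕ∞) := by
  have hcol : ∀ i, (G i).Colorable (m i) := fun i =>
    SimpleGraph.chromaticNumber_le_iff_colorable.mp (hm i).le
  have hj := wag_joinFamily_colorable_sum G m hcol
  apply le_antisymm hj.chromaticNumber_le
  have hne : (SimpleGraph.joinFamily G).chromaticNumber ≠ ⊤ :=
    (hj.chromaticNumber_le.trans_lt (WithTop.coe_lt_top _)).ne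
  obtain ⟨nn, hnn⟩ := WithTop.ne_top_iff_exists.mp hne
  have hcoln : (SimpleGraph.joinFamily G).Colorable nn :=
    SimpleGraph.chromaticNumber_le_iff_colorable.mp hnn.ge
  calc ((∑ i, m i : ℕ) : ℕ∞) = ∑ i, ((m i : ℕ) : ℕ∞) := Nat.cast_sum _ _
    _ = ∑ i, (G i).chromaticNumber := by simp [hm]
    _ ≤ (nn : ℕ∞) := wag_sum_le_of_joinFamily_colorable G hcoln
    _ = _ := hnn

lemma wag_sum_mf (m : ℕ) : ∀ k, ∑ i ∈ Finset.range k,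
    (if 2*i+2 ≤ m then 3 else if 2*i+1 ≤ m then 4 else 5) = 5*k - min m (2*k) := by
  intro k
  induction k with
  | zero => simp
  | succ n ih => rw [Finset.sum_range_succ, ih]; split_ifs with h1 h2 <;> omega

/-- Wagner's construction: given graphs H₁, …, H_{2k} whose chromatic numbers
are 3 at indices where a monotone (downward closed) predicate P holds, and 4
(even index) resp. 5 (odd index) where it fails, the join G of the disjoint
unions G_i = H_{2i-1} ⊔ H_{2i} has chromatic number
Σᵢ max(χ(H_{2i-1}), χ(H_{2i})), and the number of indices satisfying P is odd
iff χ(G) ∈ {3k+1, 3k+3, …, 5k−1} = {5k − 2i + 1 : 1 ≤ i ≤ k}. -/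
theorem wagner_construction (k : ℕ) (hk : 1 ≤ k) {V : ℕ → Type*}
    [∀ n, Fintype (V n)] (H : ∀ n, SimpleGraph (V n))
    (P : ℕ → Prop) [DecidablePred P]
    (hmono : ∀ j, 1 ≤ j → j < 2 * k → P (j + 1) → P j)
    (h3 : ∀ j, 1 ≤ j → j ≤ 2 * k → P j → (H j).chromaticNumber = 3)
    (h4 : ∀ i, 1 ≤ i → i ≤ k → ¬P (2 * i) → (H (2 * i)).chromaticNumber = 4)
    (h5 : ∀ i, 1 ≤ i → i ≤ k → ¬P (2 * i - 1) →
      (H (2 * i - 1)).chromaticNumber = 5) :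
    (SimpleGraph.joinFamily
        (fun i : Fin k => (H (2 * (i : ℕ) + 1)).disjUnion (H (2 * (i : ℕ) + 2)))).chromaticNumber
        = ∑ i : Fin k,
            max (H (2 * (i : ℕ) + 1)).chromaticNumber
                (H (2 * (i : ℕ) + 2)).chromaticNumber ∧
    (Odd ((Finset.Icc 1 (2 * k)).filter P).card ↔
      ∃ i, 1 ≤ i ∧ i ≤ k ∧
        (SimpleGraph.joinFamily
          (fun i : Fin k => (H (2 * (i : ℕ) + 1)).disjUnion (H (2 * (i : ℕ) + 2)))).chromaticNumber
          = ((5 * k - 2 * i + 1 : ℕ) : ℕ∞)) := by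
  set m := ((Finset.Icc 1 (2 * k)).filter P).card with hmdef
  -- downward closedness
  have hdown' : ∀ d i, 1 ≤ i → i + d ≤ 2 * k → P (i + d) → P i := by
    intro d
    induction d with
    | zero => exact fun i _ _ hp => hp
    | succ n ih =>
      intro i h1 h2 hp
      exact ih i h1 (by omega) (hmono (i + n) (by omega) (by omega) hp)
  have hdown : ∀ i j, 1 ≤ i → i ≤ j → j ≤ 2 * k → P j → P i := by
    intro i j h1 hij hj hp
    obtain ⟨d, rfl⟩ := Nat.exists_eq_add_of_le hij
    exact hdown' d i h1 hj hp
  have hm2k : m ≤ 2 * k := by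
    have := Finset.card_filter_le (Finset.Icc 1 (2 * k)) P
    simpa [Nat.card_Icc] using this
  -- characterization of P
  have hiff : ∀ j, 1 ≤ j → j ≤ 2 * k → (P j ↔ j ≤ m) := by
    intro j h1 h2
    constructor
    · intro hp
      have hsub : Finset.Icc 1 j ⊆ (Finset.Icc 1 (2 * k)).filter P := by
        intro i hi
        rw [Finset.mem_Icc] at hi
        rw [Finset.mem_filter, Finset.mem_Icc]
        exact ⟨⟨hi.1, hi.2.trans h2⟩, hdown i j hi.1 hi.2 h2 hp⟩
      have := Finset.card_le_card hsub
      simpa [Nat.card_Icc] using this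
    · intro hjm
      by_contra hnp
      have hsub : (Finset.Icc 1 (2 * k)).filter P ⊆ Finset.Icc 1 (j - 1) := by
        intro i hi
        rw [Finset.mem_filter, Finset.mem_Icc] at hi
        rw [Finset.mem_Icc]
        refine ⟨hi.1.1, ?_⟩
        by_contra hij
        exact hnp (hdown j i h1 (by omega) hi.1.2 hi.2)
      have := Finset.card_le_card hsub
      rw [Nat.card_Icc] at this
      omega
    -- per-index chromatic numbers
  have hA : ∀ i : Fin k,
      (H (2 * (i : ℕ) + 1)).chromaticNumber
        = ((if 2 * (i : ℕ) + 1 ≤ m then 3 else 5 : ℕ) : ℕ∞) := by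
    intro i
    have hik := i.isLt
    split_ifs with h
    · have := h3 (2 * (i : ℕ) + 1) (by omega) (by omega) ((hiff _ (by omega) (by omega)).mpr h)
      rw [this]; norm_num
    · have hnp : ¬P (2 * ((i : ℕ) + 1) - 1) := by
        have e : 2 * ((i : ℕ) + 1) - 1 = 2 * (i : ℕ) + 1 := by omega
        rw [e]
        exact fun hp => h ((hiff _ (by omega) (by omega)).mp hp)
      have := h5 ((i : ℕ) + 1) (by omega) (by omega) hnp
      have e : 2 * ((i : ℕ) + 1) - 1 = 2 * (i : ℕ) + 1 := by omega
      rw [e] at this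
      rw [this]; norm_num
  have hB : ∀ i : Fin k,
      (H (2 * (i : ℕ) + 2)).chromaticNumber
        = ((if 2 * (i : ℕ) + 2 ≤ m then 3 else 4 : ℕ) : ℕ∞) := by
    intro i
    have hik := i.isLt
    split_ifs with h
    · have := h3 (2 * (i : ℕ) + 2) (by omega) (by omega) ((hiff _ (by omega) (by omega)).mpr h)
      rw [this]; norm_num
    · have hnp : ¬P (2 * ((i : ℕ) + 1)) := by
        have e : 2 * ((i : ℕ) + 1) = 2 * (i : ℕ) + 2 := by omega
        rw [e]
        exact fun hp => h ((hiff _ (by omega) (by omega)).mp hp)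
      have := h4 ((i : ℕ) + 1) (by omega) (by omega) hnp
      have e : 2 * ((i : ℕ) + 1) = 2 * (i : ℕ) + 2 := by omega
      rw [e] at this
      rw [this]; norm_num
  set mfn : ℕ → ℕ := fun j => if 2 * j + 2 ≤ m then 3 else if 2 * j + 1 ≤ m then 4 else 5
    with hmfn
  have hmax : ∀ i : Fin k,
      max (H (2 * (i : ℕ) + 1)).chromaticNumber (H (2 * (i : ℕ) + 2)).chromaticNumber
        = ((mfn (i : ℕ) : ℕ) : ℕ∞) := by
    intro i
    rw [hA i, hB i, ← (Nat.mono_cast (α := ℕ∞)).map_max]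
    congr 1
    simp only [hmfn]
    split_ifs <;> omega
  have hG : ∀ i : Fin k,
      ((H (2 * (i : ℕ) + 1)).disjUnion (H (2 * (i : ℕ) + 2))).chromaticNumber
        = ((mfn (i : ℕ) : ℕ) : ℕ∞) := by
    intro i
    rw [wag_chromaticNumber_disjUnion _ _ (hA i) (hB i)]
    congr 1
    simp only [hmfn]
    split_ifs <;> omega
  have hjoin := wag_chromaticNumber_joinFamily
    (fun i : Fin k => (H (2 * (i : ℕ) + 1)).disjUnion (H (2 * (i : ℕ) + 2)))
    (fun i : Fin k => mfn (i : ℕ)) hG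
  have hsum : ∑ i : Fin k, mfn (i : ℕ) = 5 * k - m := by
    rw [Fin.sum_univ_eq_sum_range (fun j => mfn j) k]
    simp only [hmfn]
    rw [wag_sum_mf m k]
    omega
  have e : (∑ i : Fin k, (fun i : Fin k => mfn (i : ℕ)) i) = 5 * k - m := hsum
  have hchi : (SimpleGraph.joinFamily
      (fun i : Fin k => (H (2 * (i : ℕ) + 1)).disjUnion (H (2 * (i : ℕ) + 2)))).chromaticNumber
      = ((5 * k - m : ℕ) : ℕ∞) := by rw [hjoin, e]
  refine ⟨?_, ?_⟩
  · rw [hjoin, Nat.cast_sum]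
    refine Finset.sum_congr rfl fun i _ => ?_
    exact (hmax i).symm
  · constructor
    · rintro ⟨t, ht⟩
      refine ⟨t + 1, by omega, by omega, ?_⟩
      rw [hchi]
      congr 1
      omega
    · rintro ⟨i, h1, h2, heq⟩
      rw [hchi] at heq
      have hEq := Nat.cast_inj.mp heq
      exact ⟨i - 1, by omega⟩
end
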